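/- Let d = (d_1,…,d_n) with d_1,…,d_{n−1} ∈ ℤ ∪ {−∞} and d_n ∈ ℤ, and let ρ(d) be the unique minimal element with respect to ≤ of the set M_d = {μ ∈ C : d_i ≤ S_i(μ) for 1 ≤ i ≤ n−1, and d_n = S_n(μ)}. Then ρ(d) ∈ 𝒩; conversely, every ν ∈ 𝒩 is of the form ρ(d) for some such d. -/

import Mathlib

/-- The dominant cone `C = {x ∈ ℝⁿ : x₁ ≥ x₂ ≥ ⋯ ≥ xₙ}`. -/
def domCone (n : ℕ) : Set (EuclideanSpace ℝ (Fin n)) :=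
  {x | ∀ i j : Fin n, i ≤ j → x j ≤ x i}

/-- `S_k(x) = x₁ + ⋯ + x_k`, the sum of the first `k` coordinates. -/
def psum {n : ℕ} (x : Fin n → ℝ) (k : ℕ) : ℝ :=
  ∑ j ∈ Finset.univ.filter (fun j : Fin n => (j : ℕ) < k), x j

/-- The dominance order: `x ≤ y` iff `S_k(x) ≤ S_k(y)` for `k = 1, …, n-1`
and `S_n(x) = S_n(y)`. -/
def dle {n : ℕ} (x y : Fin n → ℝ) : Prop :=
  (∀ k, 1 ≤ k → k < n → psum x k ≤ psum y k) ∧ psum x n = psum y n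

/-- The set `M_d = {μ ∈ C : d_i ≤ S_i(μ) for 1 ≤ i ≤ n-1, d_n = S_n(μ)}`, where the
`d_i` for `1 ≤ i ≤ n-1` are allowed to be `-∞` (the bottom element of `WithBot ℝ`). -/
def Md (n : ℕ) (d : ℕ → WithBot ℝ) : Set (EuclideanSpace ℝ (Fin n)) :=
  {μ | μ ∈ domCone n ∧
       (∀ k, 1 ≤ k → k < n → d k ≤ ((psum μ k : ℝ) : WithBot ℝ)) ∧
       d n = ((psum μ n : ℝ) : WithBot ℝ)}

/-- The set `𝒩` of Newton points for `GL_n`: dominant rational `ν` with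
`S_n(ν) ∈ ℤ` and `S_i(ν) ∈ ℤ` whenever `ν_i > ν_{i+1}` (`1 ≤ i ≤ n-1`). -/
def newtonSet (n : ℕ) : Set (EuclideanSpace ℝ (Fin n)) :=
  {ν | (∀ i j : Fin n, i ≤ j → ν j ≤ ν i) ∧
       (∀ i, ∃ q : ℚ, ν i = (q : ℝ)) ∧
       (∃ m : ℤ, psum ν n = (m : ℝ)) ∧
       (∀ i : ℕ, ∀ h1 : 1 ≤ i, ∀ h2 : i < n,
          ν ⟨i, h2⟩ < ν ⟨i - 1, by omega⟩ → ∃ m : ℤ, psum ν i = (m : ℝ))}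

/-- A tuple `d` with `d_1, …, d_{n-1} ∈ ℤ ∪ {-∞}` and `d_n ∈ ℤ`. -/
def IsIntTuple (n : ℕ) (d : ℕ → WithBot ℝ) : Prop :=
  (∀ k, 1 ≤ k → k ≤ n → d k = ⊥ ∨ ∃ m : ℤ, d k = ((m : ℝ) : WithBot ℝ)) ∧
  (∃ m : ℤ, d n = ((m : ℝ) : WithBot ℝ))

/-!
For dominant `x`, the function `k ↦ S_k(x)` is concave and piecewise linear, with kinks exactly
at the breakpoints `i` where `x_i > x_{i+1}`. At a breakpoint a minimal element `ρ` of `M_d` must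
satisfy `S_i(ρ) = d_i ∈ ℤ`: otherwise shifting a little mass from `ρ_i` to `ρ_{i+1}` stays in `M_d`
and lowers `S_i`. On each linear piece `ρ` is constant, equal to a difference quotient of two
integers, hence rational. Conversely, for `ν ∈ 𝒩` take `d_i = S_i(ν)` at the breakpoints of `ν`
and `d_i = -∞` elsewhere: for dominant `μ ∈ M_d`, `S(μ) - S(ν)` is concave on each linear piece of
`S(ν)` and nonnegative at its ends, so `ν ≤ μ`.
-/

section

variable {n : ℕ}

def zeroExtend (x : Fin n → ℝ) (j : ℕ) : ℝ := if h : j < n then x ⟨j, h⟩ else 0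

def IsBreakpoint (x : Fin n → ℝ) (i : ℕ) : Prop :=
  i = 0 ∨ i = n ∨ ∃ h : i < n, x ⟨i, h⟩ < x ⟨i - 1, by omega⟩

lemma psum_zero (x : Fin n → ℝ) : psum x 0 = 0 := by
  simp [psum]

lemma psum_add (x y : Fin n → ℝ) (k : ℕ) : psum (x + y) k = psum x k + psum y k :=
  Finset.sum_add_distrib

lemma psum_sub (x y : Fin n → ℝ) (k : ℕ) : psum (x - y) k = psum x k - psum y k :=
  Finset.sum_sub_distrib ..

lemma psum_single (p : Fin n) (c : ℝ) (k : ℕ) :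
    psum (Pi.single p c) k = if (p : ℕ) < k then c else 0 := by
  simp [psum, Finset.sum_pi_single']

lemma zeroExtend_coe (x : Fin n → ℝ) (j : Fin n) : zeroExtend x j = x j := dif_pos j.isLt

lemma psum_eq_sum_range (x : Fin n → ℝ) (k : ℕ) :
    psum x k = ∑ j ∈ Finset.range k, zeroExtend x j := by
  calc psum x k = ∑ j ∈ Finset.range n, if j < k then zeroExtend x j else 0 := by
        rw [psum, Finset.sum_filter, ← Fin.sum_univ_eq_sum_range]
        simp only [zeroExtend_coe]
    _ = ∑ j ∈ Finset.range k, if j < n then zeroExtend x j else 0 := by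
        rw [← Finset.sum_filter, ← Finset.sum_filter]
        congr 1
        ext j; simp only [Finset.mem_filter, Finset.mem_range]; tauto
    _ = ∑ j ∈ Finset.range k, zeroExtend x j := by
        refine Finset.sum_congr rfl fun j _ => ?_
        unfold zeroExtend; split_ifs <;> rfl

lemma psum_sub_psum (x : Fin n → ℝ) {a b : ℕ} (hab : a ≤ b) :
    psum x b - psum x a = ∑ j ∈ Finset.Ico a b, zeroExtend x j := by
  rw [psum_eq_sum_range, psum_eq_sum_range, Finset.sum_Ico_eq_sub _ hab]

lemma psum_sub_psum_of_forall_eq {x : Fin n → ℝ} {a b : ℕ} {c : ℝ}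
    (h : ∀ j ∈ Finset.Ico a b, zeroExtend x j = c) (hab : a ≤ b) :
    psum x b - psum x a = (b - a) * c := by
  rw [psum_sub_psum x hab, Finset.sum_congr rfl h, Finset.sum_const, Nat.card_Ico, nsmul_eq_mul,
    Nat.cast_sub hab]

theorem Antitone.zeroExtend_le {x : Fin n → ℝ} (hx : Antitone x) {i j : ℕ} (hij : i ≤ j)
    (hj : j < n) : zeroExtend x j ≤ zeroExtend x i := by
  rw [zeroExtend, zeroExtend, dif_pos hj, dif_pos (hij.trans_lt hj)]
  exact hx (Fin.mk_le_mk.mpr hij)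

theorem Antitone.psum_sub_psum_le {y : Fin n → ℝ} (hy : Antitone y) {k b : ℕ} (hkb : k ≤ b)
    (hb : b ≤ n) : psum y b - psum y k ≤ (b - k) * zeroExtend y k := by
  rw [psum_sub_psum y hkb, ← Nat.cast_sub hkb, ← Nat.card_Ico, ← nsmul_eq_mul]
  exact Finset.sum_le_card_nsmul _ _ _ fun j hj => by
    rw [Finset.mem_Ico] at hj; exact hy.zeroExtend_le hj.1 (by omega)

theorem Antitone.le_psum_sub_psum {y : Fin n → ℝ} (hy : Antitone y) {a k : ℕ} (hak : a ≤ k)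
    (hk : k < n) : (k - a) * zeroExtend y k ≤ psum y k - psum y a := by
  rw [psum_sub_psum y hak, ← Nat.cast_sub hak, ← Nat.card_Ico, ← nsmul_eq_mul]
  exact Finset.card_nsmul_le_sum _ _ _ fun j hj => by
    rw [Finset.mem_Ico] at hj; exact hy.zeroExtend_le hj.2.le hk

theorem IsBreakpoint.le {x : Fin n → ℝ} {i : ℕ} (h : IsBreakpoint x i) : i ≤ n := by
  rcases h with rfl | rfl | ⟨hi, -⟩ <;> omega

lemma isBreakpoint_zero (x : Fin n → ℝ) : IsBreakpoint x 0 := Or.inl rfl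

lemma isBreakpoint_self (x : Fin n → ℝ) : IsBreakpoint x n := Or.inr (Or.inl rfl)

lemma exists_isBreakpoint_forall_Ico_eq {x : Fin n → ℝ} (hx : Antitone x) {k : ℕ} (hk : k < n) :
    ∃ a b, IsBreakpoint x a ∧ IsBreakpoint x b ∧ a ≤ k ∧ k < b ∧
      ∀ j ∈ Finset.Ico a b, zeroExtend x j = zeroExtend x k := by
  classical
  have hex : ∃ b, k < b ∧ IsBreakpoint x b := ⟨n, hk, isBreakpoint_self x⟩
  set a := Nat.findGreatest (IsBreakpoint x) k
  obtain ⟨hkb, hb⟩ := Nat.find_spec hex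
  have hbn : Nat.find hex ≤ n := Nat.find_min' hex ⟨hk, isBreakpoint_self x⟩
  have hak : a ≤ k := Nat.findGreatest_le k
  have hflat : ∀ j, a < j → j < Nat.find hex → zeroExtend x j = zeroExtend x (j - 1) := by
    intro j haj hjb
    have hnot : ¬ IsBreakpoint x j := by
      rcases le_or_gt j k with hjk | hkj
      · exact Nat.findGreatest_is_greatest haj hjk
      · exact fun h => Nat.find_min hex hjb ⟨hkj, h⟩
    refine le_antisymm (hx.zeroExtend_le (Nat.sub_le j 1) (by omega)) ?_
    have hjn : j < n := by omega
    simp only [IsBreakpoint, not_or, not_exists, not_lt] at hnot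
    rw [zeroExtend, zeroExtend, dif_pos hjn, dif_pos (by omega)]
    exact hnot.2.2 hjn
  refine ⟨a, Nat.find hex, Nat.findGreatest_spec (Nat.zero_le k) (isBreakpoint_zero x), hb,
    hak, hkb, ?_⟩
  have hconst : ∀ j, a ≤ j → j < Nat.find hex → zeroExtend x j = zeroExtend x a := by
    intro j haj hjb
    induction j, haj using Nat.le_induction with
    | base => rfl
    | succ j haj ih => rw [hflat (j + 1) (by omega) hjb, Nat.add_sub_cancel, ih (by omega)]
  intro j hj
  rw [Finset.mem_Ico] at hj
  rw [hconst j hj.1 hj.2, hconst k hak hkb]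

theorem Antitone.psum_le_of_forall_isBreakpoint {x y : Fin n → ℝ} (hx : Antitone x)
    (hy : Antitone y) (h : ∀ i, IsBreakpoint x i → psum x i ≤ psum y i) {k : ℕ} (hk : k ≤ n) :
    psum x k ≤ psum y k := by
  rcases hk.lt_or_eq with hk | rfl
  swap
  · exact h _ (isBreakpoint_self x)
  obtain ⟨a, b, ha, hb, hak, hkb, hconst⟩ := exists_isBreakpoint_forall_Ico_eq hx hk
  have hxa := psum_sub_psum_of_forall_eq
    (fun j hj => hconst j (Finset.Ico_subset_Ico_right hkb.le hj)) hak
  have hxb := psum_sub_psum_of_forall_eq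
    (fun j hj => hconst j (Finset.Ico_subset_Ico_left hak hj)) hkb.le
  have hya := hy.le_psum_sub_psum hak hk
  have hyb := hy.psum_sub_psum_le hkb.le hb.le
  have hka : (0 : ℝ) ≤ k - a := sub_nonneg.mpr (Nat.cast_le.mpr hak)
  have hbk : (0 : ℝ) ≤ b - k := sub_nonneg.mpr (Nat.cast_le.mpr hkb.le)
  have := h a ha
  have := h b hb
  -- if `x_k ≤ y_k` then `psum y - psum x` does not decrease on `[a, k]`, otherwise it
  -- decreases on `[k, b]`
  rcases le_total (zeroExtend x k) (zeroExtend y k) with hc | hc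
  · nlinarith [mul_le_mul_of_nonneg_left hc hka]
  · nlinarith [mul_le_mul_of_nonneg_left hc hbk]

lemma exists_rat_of_forall_isBreakpoint {x : Fin n → ℝ} (hx : Antitone x)
    (h : ∀ i, IsBreakpoint x i → ∃ m : ℤ, psum x i = m) (k : Fin n) : ∃ q : ℚ, x k = q := by
  obtain ⟨a, b, ha, hb, hak, hkb, hconst⟩ := exists_isBreakpoint_forall_Ico_eq hx k.isLt
  obtain ⟨ma, hma⟩ := h a ha
  obtain ⟨mb, hmb⟩ := h b hb
  have hab : (a : ℝ) < b := Nat.cast_lt.mpr (hak.trans_lt hkb)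
  have hsub := psum_sub_psum_of_forall_eq hconst (hak.trans hkb.le)
  refine ⟨(mb - ma) / (b - a), ?_⟩
  rw [hma, hmb, zeroExtend_coe] at hsub
  push_cast
  rw [eq_div_iff (sub_ne_zero.mpr hab.ne')]
  linarith

lemma psum_add_single_sub_single (x : Fin n → ℝ) {p q : Fin n} (hqp : (q : ℕ) + 1 = p)
    (ε : ℝ) (k : ℕ) :
    psum (x + Pi.single p ε - Pi.single q ε) k = psum x k - if k = p then ε else 0 := by
  rw [psum_sub, psum_add, psum_single, psum_single]
  split_ifs <;> first | (exfalso; omega) | ring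

theorem Antitone.add_single_sub_single {x : Fin n → ℝ} (hx : Antitone x) {p q : Fin n}
    (hqp : (q : ℕ) + 1 = p) {ε : ℝ} (hε : 0 ≤ ε) (hgap : 2 * ε ≤ x q - x p) :
    Antitone (x + Pi.single p ε - Pi.single q ε) := by
  intro r s hrs
  have hq : ∀ t, t < p → x q ≤ x t := fun t ht => hx (by omega)
  have hp : ∀ t, q < t → x t ≤ x p := fun t ht => hx (by omega)
  have hrs' := hx hrs
  simp only [Pi.add_apply, Pi.sub_apply, Pi.single_apply]
  split_ifs <;> subst_vars <;>
    first | (exfalso; omega) | linarith | linarith [hq r (by omega)] | linarith [hp s (by omega)]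

lemma coe_psum_eq_of_forall_mem_Md_dle {d : ℕ → WithBot ℝ} {ρ : EuclideanSpace ℝ (Fin n)}
    (hρ : ρ ∈ Md n d) (hmin : ∀ μ ∈ Md n d, dle ρ μ) {i : ℕ} (hi₀ : 0 < i) (hi : i < n)
    (hdrop : ρ ⟨i, hi⟩ < ρ ⟨i - 1, by omega⟩) : d i = psum ρ i := by
  obtain ⟨hanti, hcons, hlast⟩ : Antitone ρ ∧ _ := hρ
  by_contra hne
  obtain ⟨t, hdt, ht⟩ : ∃ t : ℝ, d i ≤ t ∧ t < psum ρ i := by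
    have hlt := (hcons i hi₀ hi).lt_of_ne hne
    generalize d i = e at hlt ⊢
    induction e using WithBot.recBotCoe with
    | bot => exact ⟨psum ρ i - 1, bot_le, by linarith⟩
    | coe r => exact ⟨r, le_rfl, WithBot.coe_lt_coe.mp hlt⟩
  set gap := ρ ⟨i - 1, by omega⟩ - ρ ⟨i, hi⟩
  set ε := min (gap / 2) (psum ρ i - t)
  have hε : 0 < ε := lt_min (by linarith) (by linarith)
  have hε_gap : 2 * ε ≤ gap := by linarith [min_le_left (gap / 2) (psum ρ i - t)]
  have hε_slack : t ≤ psum ρ i - ε := by linarith [min_le_right (gap / 2) (psum ρ i - t)]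
  have hqp : (i - 1) + 1 = i := by omega
  let μ : EuclideanSpace ℝ (Fin n) :=
    WithLp.toLp 2 (WithLp.ofLp ρ + Pi.single ⟨i, hi⟩ ε - Pi.single ⟨i - 1, by omega⟩ ε)
  have hμ (k : ℕ) : psum μ k = psum ρ k - if k = i then ε else 0 :=
    psum_add_single_sub_single _ hqp ε k
  have hμMd : μ ∈ Md n d := by
    refine ⟨hanti.add_single_sub_single hqp hε.le hε_gap, ?_, ?_⟩
    · intro k hk₀ hk
      rw [hμ]
      split_ifs with hki
      · subst hki
        exact hdt.trans (WithBot.coe_le_coe.mpr hε_slack)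
      · simpa using hcons k hk₀ hk
    · rw [hμ, if_neg hi.ne', sub_zero]
      exact hlast
  have := (hmin μ hμMd).1 i hi₀ hi
  rw [hμ, if_pos rfl] at this
  linarith

lemma exists_int_psum_of_forall_mem_Md_dle {d : ℕ → WithBot ℝ} (hd : IsIntTuple n d)
    {ρ : EuclideanSpace ℝ (Fin n)} (hρ : ρ ∈ Md n d) (hmin : ∀ μ ∈ Md n d, dle ρ μ) {i : ℕ}
    (hbp : IsBreakpoint ρ i) : ∃ m : ℤ, psum ρ i = m := by
  rcases Nat.eq_zero_or_pos i with rfl | hi₀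
  · exact ⟨0, by simp [psum_zero]⟩
  have hdi : d i = psum ρ i := by
    rcases hbp with h | rfl | ⟨hi, hdrop⟩
    · omega
    · exact hρ.2.2
    · exact coe_psum_eq_of_forall_mem_Md_dle hρ hmin hi₀ hi hdrop
  rcases hd.1 i hi₀ hbp.le with hbot | ⟨m, hm⟩
  · exact absurd (hbot ▸ hdi).symm WithBot.coe_ne_bot
  · exact ⟨m, by exact_mod_cast (hm ▸ hdi).symm⟩

lemma mem_newtonSet_iff {ν : EuclideanSpace ℝ (Fin n)} :
    ν ∈ newtonSet n ↔ Antitone ν ∧ ∀ i, IsBreakpoint ν i → ∃ m : ℤ, psum ν i = m := by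
  constructor
  · rintro ⟨hanti, -, hn, hdrop⟩
    refine ⟨hanti, fun i hbp => ?_⟩
    rcases hbp with rfl | rfl | ⟨hi, hlt⟩
    · exact ⟨0, by simp [psum_zero]⟩
    · exact hn
    · rcases Nat.eq_zero_or_pos i with rfl | hi₀
      · exact ⟨0, by simp [psum_zero]⟩
      · exact hdrop i hi₀ hi hlt
  · rintro ⟨hanti, hint⟩
    exact ⟨hanti, exists_rat_of_forall_isBreakpoint hanti hint, hint n (isBreakpoint_self _),
      fun i _ hi hlt => hint i (Or.inr (Or.inr ⟨hi, hlt⟩))⟩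

open Classical in
noncomputable def breakpointData (ν : Fin n → ℝ) (k : ℕ) : WithBot ℝ :=
  if IsBreakpoint ν k then (psum ν k : WithBot ℝ) else ⊥

lemma isIntTuple_breakpointData {ν : Fin n → ℝ}
    (hint : ∀ i, IsBreakpoint ν i → ∃ m : ℤ, psum ν i = m) : IsIntTuple n (breakpointData ν) := by
  have key : ∀ k, IsBreakpoint ν k → ∃ m : ℤ, breakpointData ν k = ((m : ℝ) : WithBot ℝ) :=
    fun k hk => (hint k hk).imp fun m hm => by rw [breakpointData, if_pos hk, hm]
  refine ⟨fun k _ _ => ?_, key n (isBreakpoint_self ν)⟩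
  by_cases hk : IsBreakpoint ν k
  · exact Or.inr (key k hk)
  · exact Or.inl (if_neg hk)

lemma mem_Md_breakpointData {ν : EuclideanSpace ℝ (Fin n)} (hν : Antitone ν) :
    ν ∈ Md n (breakpointData ν) := by
  refine ⟨hν, fun k _ _ => ?_, if_pos (isBreakpoint_self _)⟩
  unfold breakpointData
  split_ifs
  exacts [le_rfl, bot_le]

lemma dle_of_mem_Md_breakpointData {ν μ : EuclideanSpace ℝ (Fin n)} (hν : Antitone ν)
    (hμ : μ ∈ Md n (breakpointData ν)) : dle ν μ := by
  obtain ⟨hμanti, hcons, hlast⟩ := hμ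
  have hn : psum ν n = psum μ n := by
    rwa [breakpointData, if_pos (isBreakpoint_self _), WithBot.coe_inj] at hlast
  refine ⟨fun k _ hk => hν.psum_le_of_forall_isBreakpoint hμanti (fun i hbp => ?_) hk.le, hn⟩
  rcases hbp.le.lt_or_eq with hi | rfl
  · rcases Nat.eq_zero_or_pos i with rfl | hi₀
    · simp [psum_zero]
    · have := hcons i hi₀ hi
      rwa [breakpointData, if_pos hbp, WithBot.coe_le_coe] at this
  · exact hn.le

end

theorem stmt_8_general (n : ℕ) :
    (∀ d : ℕ → WithBot ℝ, IsIntTuple n d →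
      ∀ ρ ∈ Md n d, (∀ μ ∈ Md n d, dle ρ μ) → ρ ∈ newtonSet n) ∧
    (∀ ν ∈ newtonSet n, ∃ d : ℕ → WithBot ℝ, IsIntTuple n d ∧
      ν ∈ Md n d ∧ ∀ μ ∈ Md n d, dle ν μ) := by
  refine ⟨fun d hd ρ hρ hmin => ?_, fun ν hν => ?_⟩
  · exact mem_newtonSet_iff.mpr
      ⟨hρ.1, fun i hi => exists_int_psum_of_forall_mem_Md_dle hd hρ hmin hi⟩
  · obtain ⟨hanti, hint⟩ := mem_newtonSet_iff.mp hν
    exact ⟨breakpointData ν, isIntTuple_breakpointData hint, mem_Md_breakpointData hanti,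
      fun μ hμ => dle_of_mem_Md_breakpointData hanti hμ⟩

/-- Proposition 1.2(1) for `GL_n`: for integral (possibly `-∞`) `d`, the minimal element
`ρ(d)` of `M_d` lies in `𝒩`, and conversely every `ν ∈ 𝒩` arises as such a `ρ(d)`. -/
theorem stmt_8 (n : ℕ) (hn : 1 ≤ n) :
    (∀ d : ℕ → WithBot ℝ, IsIntTuple n d →
      ∀ ρ ∈ Md n d, (∀ μ ∈ Md n d, dle ρ μ) → ρ ∈ newtonSet n) ∧
    (∀ ν ∈ newtonSet n, ∃ d : ℕ → WithBot ℝ, IsIntTuple n d ∧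
      ν ∈ Md n d ∧ ∀ μ ∈ Md n d, dle ν μ) :=
  stmt_8_general n
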